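/- Let n ≥ 1 be an integer and ρ > 0. Define T(K) = K(1+K)/(n(1+nK)) for K > 0 and the Rician capacity upper bound U(K) = log₂(1 + (n(1+nK)/(K+1))·(n·min(ρ/n, T(K)) + max(ρ/n − T(K), 0))) + (n−1)·log₂(1 + (n/(1+K))·max(ρ/n − T(K), 0)). Then U(K) tends to log₂(1 + n²·ρ) as K → +∞. (This is the limit of the n × n Rician MIMO capacity upper bound as the absorption coefficient k(f) → 0, i.e. the pure line-of-sight limit.) -/

import Mathlib

open Filter Topology

theorem tendsto_one_add_mul_div_add_one (a : ℝ) :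
    Tendsto (fun x : ℝ => (1 + a * x) / (x + 1)) atTop (𝓝 a) := by
  have hdecomp : ∀ᶠ x : ℝ in atTop, a + (1 - a) * (x + 1)⁻¹ = (1 + a * x) / (x + 1) := by
    filter_upwards [eventually_gt_atTop (0 : ℝ)] with x hx
    field_simp
    ring
  have hinv : Tendsto (fun x : ℝ => (x + 1)⁻¹) atTop (𝓝 0) :=
    (tendsto_atTop_add_const_right _ 1 tendsto_id).inv_tendsto_atTop
  simpa using ((hinv.const_mul (1 - a)).const_add a).congr' hdecomp

theorem tendsto_mul_one_add_mul_div_mul_one_add_mul_atTop {a : ℝ} (ha : 1 ≤ a) :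
    Tendsto (fun x : ℝ => x * (1 + x) / (a * (1 + a * x))) atTop atTop := by
  refine tendsto_atTop_mono' atTop ?_ (tendsto_id.atTop_div_const (by positivity : 0 < a ^ 2))
  filter_upwards [eventually_ge_atTop (0 : ℝ)] with x hx
  have hrewrite : x / a ^ 2 = x * (1 + x) / (a * (a * (1 + x))) := by
    field_simp
  rw [id, hrewrite]
  gcongr
  nlinarith

/-- The Rician MIMO capacity upper bound `U(K)` tends to `log₂ (1 + n² ρ)` as the
Rician K-factor `K → +∞` (the pure line-of-sight limit `k(f) → 0`). -/
theorem rician_upper_bound_limit_K_to_infty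
    (n : ℕ) (hn : 1 ≤ n) (ρ : ℝ) (hρ : 0 < ρ) :
    Filter.Tendsto (fun K : ℝ =>
        Real.logb 2 (1 + ((n : ℝ) * (1 + n * K) / (K + 1)) *
          ((n : ℝ) * min (ρ / n) (K * (1 + K) / ((n : ℝ) * (1 + n * K))) +
            max (ρ / n - K * (1 + K) / ((n : ℝ) * (1 + n * K))) 0)) +
        ((n : ℝ) - 1) * Real.logb 2 (1 + ((n : ℝ) / (1 + K)) *
          max (ρ / n - K * (1 + K) / ((n : ℝ) * (1 + n * K))) 0))
      Filter.atTop
      (nhds (Real.logb 2 (1 + (n : ℝ) ^ 2 * ρ))) := by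
  have hn1 : (1 : ℝ) ≤ n := by exact_mod_cast hn
  have hgain : Tendsto (fun K : ℝ => (n : ℝ) * (1 + n * K) / (K + 1)) atTop (𝓝 ((n : ℝ) ^ 2)) := by
    simpa only [mul_div_assoc, sq] using (tendsto_one_add_mul_div_add_one (n : ℝ)).const_mul (n : ℝ)
  have hlos : Tendsto (fun K : ℝ => Real.logb 2 (1 + (n : ℝ) * (1 + n * K) / (K + 1) * ρ))
      atTop (𝓝 (Real.logb 2 (1 + (n : ℝ) ^ 2 * ρ))) :=
    (Real.continuousAt_logb (by positivity)).tendsto.comp ((hgain.mul_const ρ).const_add 1)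
  -- Once the water-filling threshold `T(K)` exceeds `ρ / n`, all power goes to the line-of-sight mode.
  refine hlos.congr' ?_
  filter_upwards [(tendsto_mul_one_add_mul_div_mul_one_add_mul_atTop hn1).eventually_ge_atTop
    (ρ / n)] with K hK
  rw [min_eq_left hK, max_eq_right (sub_nonpos.2 hK), mul_div_cancel₀ ρ (by positivity)]
  simp
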